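/- Let step : S → L → S → Prop be a labelled transition system, fix a distinguished internal label τ and a distinguished success label ω in L, let R : S → S → Prop be a bisimulation, and suppose R s t. If every maximal internal computation from s contains a success state, then every maximal internal computation from t contains a success state. Consequently, bisimilar states satisfy the same must-success condition. -/
import Mathlib


/-- `R` is a bisimulation for the labelled transition system `step`. -/
def IsBisimulation {S L : Type*} (step : S → L → S → Prop) (R : S → S → Prop) : Prop :=
  ∀ s t, R s t →
    (∀ l s', step s l s' → ∃ t', step t l t' ∧ R s' t') ∧
    (∀ l t', step t l t' → ∃ s', step s l s' ∧ R s' t')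

/-- A success state: it has an outgoing transition labelled `ω`. -/
def SuccessState {S L : Type*} (step : S → L → S → Prop) (ω : L) (s : S) : Prop :=
  ∃ s', step s ω s'

/-- `s` satisfies the must-success condition: every maximal internal (τ-)computation
from `s` — a finite sequence of τ-transitions ending in a state with no outgoing
τ-transition, or an infinite sequence of τ-transitions — contains a success state. -/
def MustSuccess {S L : Type*} (step : S → L → S → Prop) (τ ω : L) (s : S) : Prop :=
  (∀ (n : ℕ) (f : ℕ → S), f 0 = s → (∀ i < n, step (f i) τ (f (i + 1))) →
      (∀ s', ¬ step (f n) τ s') → ∃ i ≤ n, SuccessState step ω (f i)) ∧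
  (∀ f : ℕ → S, f 0 = s → (∀ i : ℕ, step (f i) τ (f (i + 1))) →
      ∃ i : ℕ, SuccessState step ω (f i))

/-- A matching finite chain from `s` along a finite τ-computation from `t`. -/
lemma chain_fin {S L : Type*} (step : S → L → S → Prop) (τ : L) (R : S → S → Prop)
    (hR : IsBisimulation step R) {s t : S} (hst : R s t) (f : ℕ → S) (hf0 : f 0 = t)
    (n : ℕ) (hstep : ∀ i < n, step (f i) τ (f (i + 1))) :
    ∃ g : ℕ → S, g 0 = s ∧ (∀ i < n, step (g i) τ (g (i + 1))) ∧ ∀ i ≤ n, R (g i) (f i) := by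
  have key : ∀ i (x : S), R x (f (min i n)) →
      ∃ y, (i < n → step x τ y) ∧ R y (f (min (i + 1) n)) := by
    intro i x hx
    by_cases h : i < n
    · have hm : min i n = i := by omega
      have hm' : min (i + 1) n = i + 1 := by omega
      rw [hm] at hx
      obtain ⟨y, hy1, hy2⟩ := (hR x (f i) hx).2 τ (f (i + 1)) (hstep i h)
      exact ⟨y, fun _ => hy1, by rw [hm']; exact hy2⟩
    · have hm : min (i + 1) n = min i n := by omega
      exact ⟨x, fun hc => absurd hc h, by rw [hm]; exact hx⟩
  let G : ∀ i : ℕ, {x : S // R x (f (min i n))} := fun i =>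
    Nat.rec ⟨s, by simpa [hf0] using hst⟩
      (fun i p => ⟨Classical.choose (key i p.1 p.2),
        (Classical.choose_spec (key i p.1 p.2)).2⟩) i
  refine ⟨fun i => (G i).1, rfl, ?_, ?_⟩
  · intro i hi
    exact (Classical.choose_spec (key i (G i).1 (G i).2)).1 hi
  · intro i hi
    have h := (G i).2
    simp only [min_eq_left hi] at h
    exact h

/-- A matching infinite chain from `s` along an infinite τ-computation from `t`. -/
lemma chain_inf {S L : Type*} (step : S → L → S → Prop) (τ : L) (R : S → S → Prop)
    (hR : IsBisimulation step R) {s t : S} (hst : R s t) (f : ℕ → S) (hf0 : f 0 = t)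
    (hstep : ∀ i : ℕ, step (f i) τ (f (i + 1))) :
    ∃ g : ℕ → S, g 0 = s ∧ (∀ i : ℕ, step (g i) τ (g (i + 1))) ∧ ∀ i : ℕ, R (g i) (f i) := by
  have key : ∀ i (x : S), R x (f i) → ∃ y, step x τ y ∧ R y (f (i + 1)) := by
    intro i x hx
    exact (hR x (f i) hx).2 τ (f (i + 1)) (hstep i)
  let G : ∀ i : ℕ, {x : S // R x (f i)} := fun i =>
    Nat.rec ⟨s, hf0 ▸ hst⟩
      (fun i p => ⟨Classical.choose (key i p.1 p.2),
        (Classical.choose_spec (key i p.1 p.2)).2⟩) i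
  refine ⟨fun i => (G i).1, rfl, ?_, fun i => (G i).2⟩
  intro i
  exact (Classical.choose_spec (key i (G i).1 (G i).2)).1

/-- If `R` is a bisimulation and `R s t`, and every maximal internal
computation from `s` contains a success state, then every maximal internal
computation from `t` contains a success state; bisimilar states satisfy the same
must-success condition. -/
theorem bisim_mustSuccess {S L : Type*} (step : S → L → S → Prop) (τ ω : L)
    (R : S → S → Prop) (hR : IsBisimulation step R) {s t : S} (hst : R s t) :
    MustSuccess step τ ω s → MustSuccess step τ ω t := by
  intro hs
  constructor
  · intro n f hf0 hsteps hmax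
    obtain ⟨g, hg0, hgstep, hgR⟩ := chain_fin step τ R hR hst f hf0 n hsteps
    have hgmax : ∀ s', ¬ step (g n) τ s' := by
      intro s' hs'
      obtain ⟨t', ht', _⟩ := (hR (g n) (f n) (hgR n le_rfl)).1 τ s' hs'
      exact hmax t' ht'
    obtain ⟨i, hi, x, hx⟩ := hs.1 n g hg0 hgstep hgmax
    obtain ⟨x', hx', _⟩ := (hR (g i) (f i) (hgR i hi)).1 ω x hx
    exact ⟨i, hi, x', hx'⟩
  · intro f hf0 hsteps
    obtain ⟨g, hg0, hgstep, hgR⟩ := chain_inf step τ R hR hst f hf0 hsteps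
    obtain ⟨i, x, hx⟩ := hs.2 g hg0 hgstep
    obtain ⟨x', hx', _⟩ := (hR (g i) (f i) (hgR i)).1 ω x hx
    exact ⟨i, x', hx'⟩
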